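/- Assume furthermore E⁰_0 = 1. Then for every λ ∈ X⁺: E^∞_λ = E¹_{λ⁰} · F(E¹_{λ¹}) · F²(E¹_{λ²}) ⋯, a product in which all but finitely many factors equal 1 (since λ^k = 0 for large k and E¹_0 = E⁰_0 = 1). -/

import Mathlib

/-!
Setting: `X⁺ = I → ℕ` (componentwise addition) for a finite index set `I`, `p ≥ 2`.
`digit p lam k` is the `k`-th base-`p` digit `λ^k` of `lam` (so `λ^k ∈ X⁺_red` and
`lam = ∑_k p^k • λ^k`); `shift p k lam = ∑_{j≥k} p^{j-k} λ^j`;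
`trunc p k lam = ∑_{0≤j≤k-1} p^j λ^j`.
-/

namespace LusztigChar

variable {I : Type*} [Fintype I] {R : Type*} [CommRing R]

/-- The `k`-th digit `λ^k` of `λ ∈ X⁺ = I → ℕ` in base `p`. -/
def digit (p : ℕ) (lam : I → ℕ) (k : ℕ) : I → ℕ := fun i => lam i / p ^ k % p

/-- `∑_{j≥k} p^{j-k} λ^j ∈ X⁺` (a sum with finitely many nonzero terms). -/
noncomputable def shift (p k : ℕ) (lam : I → ℕ) : I → ℕ :=
  ∑ᶠ j : ℕ, p ^ j • digit p lam (k + j)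

/-- `∑_{0≤j≤k-1} p^j λ^j ∈ X⁺`. -/
def trunc (p k : ℕ) (lam : I → ℕ) : I → ℕ :=
  ∑ j ∈ Finset.range k, p ^ j • digit p lam j

/-- The recursive family `E^k : X⁺ → R` built from `E⁰ = E0` and the integers
`p_{μ,λ} = P μ λ`:  `E^k_λ = ∑_μ p_{μ, ∑_{j≥k-1} p^{j-k+1} λ^j} · E^{k-1}_{∑_{0≤j≤k-2} p^j λ^j + p^{k-1} μ}`
for `k ≥ 1`. -/
noncomputable def E (p : ℕ) (P : (I → ℕ) → (I → ℕ) → ℤ) (E0 : (I → ℕ) → R) :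
    ℕ → (I → ℕ) → R
  | 0 => E0
  | k + 1 => fun lam =>
      ∑ᶠ mu : I → ℕ, P mu (shift p k lam) • E p P E0 k (trunc p k lam + p ^ k • mu)

end LusztigChar

/-!
Induction on `k` gives `E^{k+1}_λ = ∏_{h<k} F^h(E¹_{λ^h}) · F^k(E¹_{shift_k λ})`. In the step, the
argument `trunc_{k+1} λ + p^{k+1} μ` of `E^{k+1}` has the same first `k` digits as `λ` and `k`-th
shift `λ^k + p μ`, so the Steinberg identity splits off `F^{k+1}(E⁰_μ)`; summing against `p_{μ,·}`
then rebuilds `F^{k+1}(E¹)`, because `F^{k+1}` is additive and the sum is finite (`N` bounds every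
`μ ≤ ν`). Once `p^k` exceeds every coordinate of `λ` the shift is `0`, and `E¹_0 = E⁰_0 = 1`.
-/

namespace LusztigChar

open Function

variable {I : Type*} {p : ℕ}

lemma trunc_succ (k : ℕ) (lam : I → ℕ) :
    trunc p (k + 1) lam = trunc p k lam + p ^ k • digit p lam k :=
  Finset.sum_range_succ _ _

lemma trunc_apply (k : ℕ) (lam : I → ℕ) (i : I) : trunc p k lam i = lam i % p ^ k := by
  induction k with
  | zero => simp [trunc, Nat.mod_one]
  | succ k ih =>
    rw [trunc_succ, Pi.add_apply, ih, pow_succ, Nat.mod_mul, Pi.smul_apply, smul_eq_mul, digit]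

lemma div_pow_mod_eq_of_modEq {x y h : ℕ} (hxy : x ≡ y [MOD p ^ (h + 1)]) :
    x / p ^ h % p = y / p ^ h % p := by
  rw [← Nat.mod_mul_right_div_self, ← Nat.mod_mul_right_div_self y, ← pow_succ, hxy]

lemma digit_trunc_add_smul {h k : ℕ} (hhk : h < k) (lam mu : I → ℕ) :
    digit p (trunc p k lam + p ^ k • mu) h = digit p lam h := by
  funext i
  refine div_pow_mod_eq_of_modEq (Nat.ModEq.of_dvd (pow_dvd_pow p hhk) ?_)
  simp only [Pi.add_apply, Pi.smul_apply, smul_eq_mul, trunc_apply]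
  exact ((Nat.mod_modEq _ _).add_right _).trans (by simp [Nat.ModEq])

variable [Fintype I]

lemma apply_lt_pow (hp : 1 < p) {lam : I → ℕ} {k : ℕ} (hk : Finset.univ.sup lam < k)
    (i : I) : lam i < p ^ k :=
  ((Finset.le_sup (Finset.mem_univ i)).trans_lt hk).trans (Nat.lt_pow_self hp)

lemma digit_eq_zero (hp : 1 < p) {lam : I → ℕ} {k : ℕ} (hk : Finset.univ.sup lam < k) :
    digit p lam k = 0 :=
  funext fun i => by simp [digit, Nat.div_eq_of_lt (apply_lt_pow hp hk i)]

lemma shift_zero (hp : 1 < p) (lam : I → ℕ) : shift p 0 lam = lam := by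
  set n := Finset.univ.sup lam + 1
  have hsupp : support (fun j => p ^ j • digit p lam j) ⊆ Finset.range n := by
    intro j hj
    by_contra hjn
    simp only [Finset.coe_range, Set.mem_Iio, not_lt] at hjn
    exact hj (by simp [digit_eq_zero hp (Nat.lt_of_succ_le hjn)])
  have htrunc : shift p 0 lam = trunc p n lam := by
    simp only [shift, zero_add, finsum_eq_sum_of_support_subset _ hsupp, trunc]
  funext i
  rw [htrunc, trunc_apply, Nat.mod_eq_of_lt (apply_lt_pow hp (Nat.lt_succ_self _) i)]

lemma shift_apply (hp : 1 < p) (k : ℕ) (lam : I → ℕ) (i : I) :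
    shift p k lam i = lam i / p ^ k := by
  have hdigit : ∀ j, digit p lam (k + j) = digit p (fun i => lam i / p ^ k) j := fun j =>
    funext fun i => by simp only [digit, pow_add, Nat.div_div_eq_div_mul]
  have : shift p k lam = shift p 0 (fun i => lam i / p ^ k) := by
    simp only [shift, hdigit, zero_add]
  rw [this, shift_zero hp]

lemma shift_eq_zero (hp : 1 < p) {lam : I → ℕ} {k : ℕ} (hk : Finset.univ.sup lam < k) :
    shift p k lam = 0 :=
  funext fun i => by simp [shift_apply hp, Nat.div_eq_of_lt (apply_lt_pow hp hk i)]

lemma shift_trunc_add_smul (hp : 1 < p) (k : ℕ) (lam mu : I → ℕ) :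
    shift p k (trunc p k lam + p ^ k • mu) = mu := by
  funext i
  have hpk : 0 < p ^ k := pow_pos (by omega) k
  simp only [shift_apply hp, Pi.add_apply, Pi.smul_apply, smul_eq_mul, trunc_apply,
    Nat.add_mul_div_left _ _ hpk, Nat.div_eq_of_lt (Nat.mod_lt _ hpk), zero_add]

lemma shift_trunc_succ_add_smul (hp : 1 < p) (k : ℕ) (lam mu : I → ℕ) :
    shift p k (trunc p (k + 1) lam + p ^ (k + 1) • mu) = digit p lam k + p • mu := by
  rw [trunc_succ, pow_succ, mul_smul, add_assoc, ← smul_add, shift_trunc_add_smul hp]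

lemma apply_le_map (N : (I → ℕ) →+ ℕ) (hN : ∀ a, N a = 0 → a = 0)
    (mu : I → ℕ) (i : I) : mu i ≤ N mu := by
  classical
  have hNi : 0 < N (Pi.single i 1) :=
    Nat.pos_of_ne_zero fun h => by simpa using congr_fun (hN _ h) i
  calc mu i ≤ mu i * N (Pi.single i 1) := Nat.le_mul_of_pos_right _ hNi
    _ ≤ ∑ j, mu j * N (Pi.single j 1) :=
      Finset.single_le_sum (f := fun j => mu j * N (Pi.single j 1)) (fun _ _ => Nat.zero_le _)
        (Finset.mem_univ i)
    _ = N mu := by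
      conv_rhs => rw [← Finset.univ_sum_single mu]
      rw [map_sum]
      refine Finset.sum_congr rfl fun j _ => ?_
      rw [← smul_eq_mul, ← map_nsmul, ← Pi.single_smul, smul_eq_mul, mul_one]

lemma finite_setOf_map_le (N : (I → ℕ) →+ ℕ) (hN : ∀ a, N a = 0 → a = 0)
    (B : ℕ) : {mu : I → ℕ | N mu ≤ B}.Finite := by
  classical
  exact (Set.finite_Iic fun _ => B).subset fun mu hmu i => (apply_le_map N hN mu i).trans hmu

variable {R : Type*} [CommRing R] {P : (I → ℕ) → (I → ℕ) → ℤ} {E0 : (I → ℕ) → R}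

lemma E_one_eq (hp : 1 < p) (nu : I → ℕ) :
    E p P E0 1 nu = ∑ᶠ mu, P mu nu • E0 mu := by
  show ∑ᶠ mu, P mu (shift p 0 nu) • E0 (trunc p 0 nu + p ^ 0 • mu) = _
  simp [shift_zero hp, trunc]

lemma E_one_zero (hp : 1 < p) (hP_zero : ∀ mu, P mu 0 ≠ 0 → mu = 0)
    (hP : P 0 0 = 1) (hE00 : E0 0 = 1) : E p P E0 1 0 = 1 := by
  rw [E_one_eq hp, finsum_eq_single _ 0 fun mu hmu => by
    rw [not_imp_comm.mp (hP_zero mu) hmu, zero_smul], hP, hE00, one_smul]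

lemma finsum_smul_mul_map_E0 (hp : 1 < p) {nu : I → ℕ}
    (hPfin : {mu | P mu nu ≠ 0}.Finite) (g : R →+* R) (c : R) :
    ∑ᶠ mu, P mu nu • (c * g (E0 mu)) = c * g (E p P E0 1 nu) := by
  have hsupp : HasFiniteSupport fun mu => P mu nu • E0 mu :=
    hPfin.subset (support_smul_subset_left (fun mu => P mu nu) E0)
  have := map_finsum ((AddMonoidHom.mulLeft c).comp (g : R →+ R)) hsupp
  simp only [AddMonoidHom.comp_apply, AddMonoidHom.coe_mulLeft, AddMonoidHom.coe_coe,
    map_zsmul] at this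
  rw [E_one_eq hp, this]

lemma E_one_add_smul (hp : 1 < p) {F : R →+* R}
    (hstein : ∀ lam : I → ℕ,
      E p P E0 1 lam = E p P E0 1 (digit p lam 0) * F (E0 (shift p 1 lam)))
    {d : I → ℕ} (hd : ∀ i, d i < p) (mu : I → ℕ) :
    E p P E0 1 (d + p • mu) = E p P E0 1 d * F (E0 mu) := by
  have hdigit : digit p d 0 = d := funext fun i => by simp [digit, Nat.mod_eq_of_lt (hd i)]
  have htrunc : d + p • mu = trunc p 1 d + p ^ 1 • mu := by
    rw [trunc, Finset.sum_range_one, pow_zero, one_smul, hdigit, pow_one]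
  rw [hstein, htrunc, digit_trunc_add_smul one_pos, hdigit, shift_trunc_add_smul hp]

lemma E_succ_eq_prod_mul (hp : 1 < p) (hPfin : ∀ nu, {mu | P mu nu ≠ 0}.Finite)
    {F : R →+* R} (hstein : ∀ lam : I → ℕ,
      E p P E0 1 lam = E p P E0 1 (digit p lam 0) * F (E0 (shift p 1 lam)))
    (k : ℕ) (lam : I → ℕ) :
    E p P E0 (k + 1) lam = (∏ h ∈ Finset.range k, (F ^ h) (E p P E0 1 (digit p lam h))) *
      (F ^ k) (E p P E0 1 (shift p k lam)) := by
  induction k generalizing lam with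
  | zero => simp [shift_zero hp]
  | succ k ih =>
    set C := ∏ h ∈ Finset.range (k + 1), (F ^ h) (E p P E0 1 (digit p lam h)) with hC
    have hterm : ∀ mu, E p P E0 (k + 1) (trunc p (k + 1) lam + p ^ (k + 1) • mu) =
        C * (F ^ (k + 1)) (E0 mu) := fun mu => by
      rw [ih, shift_trunc_succ_add_smul hp,
        E_one_add_smul hp hstein (d := digit p lam k) (fun i => Nat.mod_lt _ (by omega)),
        map_mul,
        Finset.prod_congr rfl fun h hh =>
          by rw [digit_trunc_add_smul (Nat.lt_succ_of_lt (Finset.mem_range.mp hh))],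
        hC, Finset.prod_range_succ, mul_assoc, pow_succ, RingHom.mul_def, RingHom.comp_apply]
    calc E p P E0 (k + 1 + 1) lam
        = ∑ᶠ mu, P mu (shift p (k + 1) lam) •
            E p P E0 (k + 1) (trunc p (k + 1) lam + p ^ (k + 1) • mu) := rfl
      _ = ∑ᶠ mu, P mu (shift p (k + 1) lam) • (C * (F ^ (k + 1)) (E0 mu)) := by
        simp only [hterm]
      _ = C * (F ^ (k + 1)) (E p P E0 1 (shift p (k + 1) lam)) :=
        finsum_smul_mul_map_E0 hp (hPfin _) _ _

theorem Einf_eq_finprod_iterate_general {I : Type*} [Fintype I] {R : Type*} [CommRing R]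
    (p : ℕ) (hp : 2 ≤ p)
    (le : (I → ℕ) → (I → ℕ) → Prop)
    (N : (I → ℕ) →+ ℕ)
    (hN_zero : ∀ a, N a = 0 → a = 0)
    (hN_mono : ∀ a b, le a b → N a ≤ N b)
    (P : (I → ℕ) → (I → ℕ) → ℤ)
    (hP_le : ∀ mu lam, P mu lam ≠ 0 → le mu lam)
    (hP_diag : ∀ lam, P lam lam = 1)
    (E0 : (I → ℕ) → R) (hE00 : E0 0 = 1)
    (Einf : (I → ℕ) → R)
    (hEinf : ∀ lam, ∃ n : ℕ, ∀ k, n ≤ k → E p P E0 k lam = Einf lam)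
    (F : R →+* R)
    (hSteinberg : ∀ lam : I → ℕ,
      E p P E0 1 lam = E p P E0 1 (digit p lam 0) * F (E0 (shift p 1 lam)))
    (lam : I → ℕ) :
    (∃ n : ℕ, ∀ h, n ≤ h → (⇑F)^[h] (E p P E0 1 (digit p lam h)) = 1) ∧
    Einf lam = ∏ᶠ h : ℕ, (⇑F)^[h] (E p P E0 1 (digit p lam h)) := by
  have hPfin : ∀ nu, {mu | P mu nu ≠ 0}.Finite := fun nu =>
    (finite_setOf_map_le N hN_zero (N nu)).subset fun mu hmu => hN_mono _ _ (hP_le _ _ hmu)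
  have hE1 : E p P E0 1 0 = 1 := by
    refine E_one_zero hp (fun mu hmu => hN_zero mu ?_) (hP_diag 0) hE00
    exact Nat.le_zero.mp ((hN_mono _ _ (hP_le _ _ hmu)).trans_eq (map_zero N))
  have hfactor : ∀ h, Finset.univ.sup lam < h → (⇑F)^[h] (E p P E0 1 (digit p lam h)) = 1 :=
    fun h hh => by rw [digit_eq_zero hp hh, hE1, iterate_map_one]
  refine ⟨⟨_, fun h hh => hfactor h hh⟩, ?_⟩
  obtain ⟨n, hn⟩ := hEinf lam
  set k := max n (Finset.univ.sup lam + 1)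
  rw [← hn (k + 1) (by omega), E_succ_eq_prod_mul hp hPfin hSteinberg,
    shift_eq_zero hp (by omega), hE1, map_one, mul_one,
    finprod_eq_prod_of_mulSupport_subset (s := Finset.range k)]
  · simp only [RingHom.coe_pow]
  · intro h hh
    rw [Finset.coe_range, Set.mem_Iio]
    by_contra hhk
    exact hh (hfactor h (by omega))

/-- paper 6(c): assuming `E⁰_0 = 1` and the Steinberg-type identity,
`E^∞_λ = E¹_{λ⁰} · F(E¹_{λ¹}) · F²(E¹_{λ²}) ⋯`, a product in which all but finitely many
factors equal `1`. -/
theorem Einf_eq_finprod_iterate {I : Type*} [Fintype I] {R : Type*} [CommRing R]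
    (p : ℕ) (hp : 2 ≤ p)
    (le : (I → ℕ) → (I → ℕ) → Prop)
    (hle_refl : ∀ a, le a a)
    (hle_antisymm : ∀ a b, le a b → le b a → a = b)
    (hle_trans : ∀ a b c, le a b → le b c → le a c)
    (N : (I → ℕ) →+ ℕ)
    (hN_zero : ∀ a, N a = 0 → a = 0)
    (hN_mono : ∀ a b, le a b → N a ≤ N b)
    (P : (I → ℕ) → (I → ℕ) → ℤ)
    (hP_le : ∀ mu lam, P mu lam ≠ 0 → le mu lam)
    (hP_diag : ∀ lam, P lam lam = 1)
    (E0 : (I → ℕ) → R) (hE00 : E0 0 = 1)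
    (Einf : (I → ℕ) → R)
    (hEinf : ∀ lam, ∃ n : ℕ, ∀ k, n ≤ k → E p P E0 k lam = Einf lam)
    (F : R →+* R)
    (hSteinberg : ∀ lam : I → ℕ,
      E p P E0 1 lam = E p P E0 1 (digit p lam 0) * F (E0 (shift p 1 lam)))
    (lam : I → ℕ) :
    (∃ n : ℕ, ∀ h, n ≤ h → (⇑F)^[h] (E p P E0 1 (digit p lam h)) = 1) ∧
    Einf lam = ∏ᶠ h : ℕ, (⇑F)^[h] (E p P E0 1 (digit p lam h)) :=
  Einf_eq_finprod_iterate_general p hp le N hN_zero hN_mono P hP_le hP_diag E0 hE00 Einf hEinf F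
    hSteinberg lam

end LusztigChar
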